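/- The ℚ-algebra homomorphism ψ: ℚ[Z,R,S]/⟨Z(R−S)⟩ → B = ℚ[z,r,s]/⟨z(r−s)⟩ determined by ψ(Z) = z, ψ(R) = r², ψ(S) = s² is well defined (i.e. z(r²−s²) = 0 in B) and injective, and its image is exactly the ℚ-subalgebra of B generated by z, r² and s². Equivalently, the kernel of the ℚ-algebra homomorphism ℚ[Z,R,S] → B sending Z ↦ z, R ↦ r², S ↦ s² is the principal ideal ⟨Z(R−S)⟩. -/

import Mathlib

/-!
`θ` factors through the substitution `σ : Z ↦ z, R ↦ r², S ↦ s²` of `ℚ[z,r,s]`, which is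
injective (after also squaring `z` it is `expand 2`) and commutes with `Z ↦ 0` and with `S ↦ R`. Divisibility by `z` and by `r - s` is
detected by exactly these two substitutions, so `z ∣ σ p ↔ Z ∣ p` and
`r - s ∣ σ p ↔ R - S ∣ p`. Since `z` is prime and does not divide `r - s`, divisibility by
`z(r - s)` amounts to divisibility by both factors; hence `ker θ = ⟨Z(R - S)⟩`, and the claims
about `ψ` follow formally.
-/

noncomputable section

open MvPolynomial

/-- The polynomial ring ℚ[z,r,s] (also serving as ℚ[Z,R,S]). -/
abbrev P3 : Type := MvPolynomial (Fin 3) ℚ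

/-- The ideal `⟨z(r−s)⟩`. -/
def relB : Ideal P3 := Ideal.span {(X 0 : P3) * (X 1 - X 2)}

/-- `B = ℚ[z,r,s]/⟨z(r−s)⟩`. -/
abbrev Bring : Type := P3 ⧸ relB

/-- The image of `z` in `B`. -/
def zB : Bring := Ideal.Quotient.mk relB (X 0)
/-- The image of `r` in `B`. -/
def rB : Bring := Ideal.Quotient.mk relB (X 1)
/-- The image of `s` in `B`. -/
def sB : Bring := Ideal.Quotient.mk relB (X 2)

/-- The ℚ-algebra map `θ : ℚ[Z,R,S] → B`, `Z ↦ z`, `R ↦ r²`, `S ↦ s²`. -/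
def θmap : P3 →ₐ[ℚ] Bring := aeval ![zB, rB ^ 2, sB ^ 2]

namespace MvPolynomial

variable {σ R : Type*}

section CommSemiring

variable [CommSemiring R]

theorem notMem_vars_modMonomial_single (p : MvPolynomial σ R) (i : σ) :
    i ∉ (p.modMonomial (Finsupp.single i 1)).vars := by
  rw [mem_vars_iff_mem_support]
  rintro ⟨c, hc, hi⟩
  refine mem_support_iff.1 hc (coeff_modMonomial_of_le p ?_)
  rwa [Finsupp.single_le_iff, Nat.one_le_iff_ne_zero, ← Finsupp.mem_support_iff]

theorem aeval_X_pow_injective {n : ℕ} (hn : 0 < n) {k : σ → ℕ} (hk : ∀ i, k i ∣ n) :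
    Function.Injective (aeval (R := R) fun i => (X i : MvPolynomial σ R) ^ k i) := by
  have hexpand : (aeval (R := R) fun i => (X i : MvPolynomial σ R) ^ (n / k i)).comp
      (aeval fun i => X i ^ k i) = expand n := by
    ext i
    simp [← pow_mul, Nat.div_mul_cancel (hk i)]
  exact .of_comp (f := aeval (R := R) fun i => (X i : MvPolynomial σ R) ^ (n / k i))
    (by rw [← AlgHom.coe_comp, hexpand]; exact expand_injective hn)

variable [DecidableEq σ]

theorem aeval_update_eq_self_of_notMem_vars {i : σ} {p : MvPolynomial σ R} (hi : i ∉ p.vars)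
    (t : MvPolynomial σ R) : aeval (Function.update X i t) p = p := by
  conv_rhs => rw [← aeval_X_left_apply p]
  refine eval₂_congr (h := fun {j c} hj hc => Function.update_of_ne ?_ _ _) ..
  rintro rfl
  exact hi ((mem_vars_iff_mem_support j).2 ⟨c, mem_support_iff.2 hc, hj⟩)

theorem X_dvd_iff_aeval_update_zero {i : σ} {p : MvPolynomial σ R} :
    X i ∣ p ↔ aeval (Function.update (X (R := R)) i 0) p = 0 := by
  refine ⟨fun ⟨q, hq⟩ => by simp [hq], fun hp => ?_⟩
  rw [X_dvd_iff_modMonomial_eq_zero]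
  have hdecomp := congrArg (aeval (Function.update (X (R := R)) i 0))
    (p.modMonomial_add_divMonomial_single i)
  rwa [map_add, map_mul, aeval_X, Function.update_self, zero_mul, add_zero, hp,
    aeval_update_eq_self_of_notMem_vars (notMem_vars_modMonomial_single p i)] at hdecomp

end CommSemiring

/-- Reduced to `X_dvd_iff_aeval_update_zero` by the involution `X j ↦ X i - X j`. -/
theorem X_sub_X_dvd_iff_aeval_update [CommRing R] [DecidableEq σ] {i j : σ} (hij : i ≠ j)
    {p : MvPolynomial σ R} :
    (X i - X j : MvPolynomial σ R) ∣ p ↔ aeval (Function.update (X (R := R)) j (X i)) p = 0 := by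
  set e := aeval (R := R) (Function.update X j (X i - X j : MvPolynomial σ R))
  have he : e.comp e = AlgHom.id R _ := by
    ext k
    by_cases hk : k = j
    · subst hk; simp [e, Function.update_of_ne hij]
    · simp [e, Function.update_of_ne hk]
  have hkill : (aeval (Function.update (X (R := R)) j 0)).comp e =
      aeval (Function.update X j (X i)) := by
    ext k
    by_cases hk : k = j
    · subst hk; simp [e, Function.update_of_ne hij]
    · simp [e, Function.update_of_ne hk]
  let E : MvPolynomial σ R ≃ₐ[R] MvPolynomial σ R := AlgEquiv.ofAlgHom e e he he
  have hEX : E (X j) = X i - X j := by simp [E, e]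
  have hEE : E (E p) = p := AlgHom.congr_fun he p
  calc X i - X j ∣ p ↔ E (X j) ∣ E (E p) := by rw [hEX, hEE]
    _ ↔ X j ∣ E p := map_dvd_iff E
    _ ↔ _ := by rw [X_dvd_iff_aeval_update_zero, ← hkill]; rfl

end MvPolynomial

theorem Ideal.Quotient.injective_of_ker_comp_mk_le {A S : Type*} [CommRing A] [Ring S]
    {I : Ideal A} (ψ : A ⧸ I →+* S) (h : RingHom.ker (ψ.comp (Ideal.Quotient.mk I)) ≤ I) :
    Function.Injective ψ := by
  refine (injective_iff_map_eq_zero ψ).2 fun u hu => ?_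
  obtain ⟨a, rfl⟩ := Ideal.Quotient.mk_surjective u
  exact Ideal.Quotient.eq_zero_iff_mem.2 (h hu)

def squareRS : P3 →ₐ[ℚ] P3 := aeval fun i => X i ^ (![1, 2, 2] : Fin 3 → ℕ) i

theorem θmap_eq_mkₐ_comp_squareRS : θmap = (Ideal.Quotient.mkₐ ℚ relB).comp squareRS := by
  ext i
  fin_cases i <;> simp [θmap, squareRS, zB, rB, sB]

theorem squareRS_injective : Function.Injective squareRS :=
  aeval_X_pow_injective two_pos fun i => by fin_cases i <;> decide

theorem aeval_update_zero_comp_squareRS :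
    (aeval (Function.update (X (R := ℚ)) 0 0)).comp squareRS =
      squareRS.comp (aeval (Function.update X 0 0)) := by
  ext i
  fin_cases i <;> simp [squareRS]

theorem aeval_update_X_comp_squareRS :
    (aeval (Function.update (X (R := ℚ)) 2 (X 1))).comp squareRS =
      squareRS.comp (aeval (Function.update X 2 (X 1))) := by
  ext i
  fin_cases i <;> simp [squareRS]

theorem X_zero_dvd_squareRS_iff {p : P3} : X 0 ∣ squareRS p ↔ X 0 ∣ p := by
  rw [X_dvd_iff_aeval_update_zero, X_dvd_iff_aeval_update_zero, ← AlgHom.comp_apply,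
    aeval_update_zero_comp_squareRS, AlgHom.comp_apply, map_eq_zero_iff _ squareRS_injective]

theorem X_one_sub_X_two_dvd_squareRS_iff {p : P3} :
    X 1 - X 2 ∣ squareRS p ↔ X 1 - X 2 ∣ p := by
  rw [X_sub_X_dvd_iff_aeval_update (by decide), X_sub_X_dvd_iff_aeval_update (by decide),
    ← AlgHom.comp_apply, aeval_update_X_comp_squareRS, AlgHom.comp_apply,
    map_eq_zero_iff _ squareRS_injective]

theorem X_zero_mul_dvd_iff {q : P3} : X 0 * (X 1 - X 2) ∣ q ↔ X 0 ∣ q ∧ X 1 - X 2 ∣ q := by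
  refine ⟨fun h => ⟨dvd_of_mul_right_dvd h, dvd_of_mul_left_dvd h⟩, fun ⟨h0, h12⟩ => ?_⟩
  have hcop : IsRelPrime (X 0 : P3) (X 1 - X 2) := by
    rw [X_prime.irreducible.isRelPrime_iff_not_dvd, X_dvd_iff_aeval_update_zero]
    simp [sub_eq_zero, X_injective.eq_iff]
  exact hcop.mul_dvd_of_left_isPrimal h0 h12 X_prime.isPrimal

theorem zB_mul_sq_sub_sq : zB * (rB ^ 2 - sB ^ 2) = 0 := by
  rw [zB, rB, sB, ← map_pow, ← map_pow, ← map_sub, ← map_mul, Ideal.Quotient.eq_zero_iff_mem,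
    relB, Ideal.mem_span_singleton]
  exact ⟨X 1 + X 2, by ring⟩

theorem ker_θmap : RingHom.ker (θmap : P3 →+* Bring) = relB := by
  ext p
  rw [RingHom.mem_ker, θmap_eq_mkₐ_comp_squareRS]
  change Ideal.Quotient.mk relB (squareRS p) = 0 ↔ _
  rw [Ideal.Quotient.eq_zero_iff_mem, relB, Ideal.mem_span_singleton, Ideal.mem_span_singleton,
    X_zero_mul_dvd_iff, X_zero_mul_dvd_iff, X_zero_dvd_squareRS_iff,
    X_one_sub_X_two_dvd_squareRS_iff]

theorem range_θmap : θmap.range = Algebra.adjoin ℚ {zB, rB ^ 2, sB ^ 2} := by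
  rw [θmap, ← Algebra.adjoin_range_eq_range_aeval, Matrix.range_cons, Matrix.range_cons,
    Matrix.range_cons_empty, Set.singleton_union, Set.singleton_union]

theorem statement8 :
    -- well-definedness of `ψ`: `z(r² − s²) = 0` in `B`
    zB * (rB ^ 2 - sB ^ 2) = 0 ∧
    -- the kernel of `θ` is exactly `⟨Z(R−S)⟩`
    RingHom.ker (θmap : P3 →+* Bring) = Ideal.span {(X 0 : P3) * (X 1 - X 2)} ∧
    -- the image of `θ` is the ℚ-subalgebra generated by `z`, `r²`, `s²`
    θmap.range = Algebra.adjoin ℚ {zB, rB ^ 2, sB ^ 2} ∧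
    -- hence the induced map `ψ` on `ℚ[Z,R,S]/⟨Z(R−S)⟩` is injective with that image
    (∀ ψ : Bring →ₐ[ℚ] Bring, ψ.comp (Ideal.Quotient.mkₐ ℚ relB) = θmap →
      Function.Injective ψ ∧ ψ.range = Algebra.adjoin ℚ {zB, rB ^ 2, sB ^ 2}) := by
  refine ⟨zB_mul_sq_sub_sq, ker_θmap, range_θmap, fun ψ hψ => ⟨?_, ?_⟩⟩
  · have hker := ker_θmap
    rw [← hψ] at hker
    exact Ideal.Quotient.injective_of_ker_comp_mk_le (ψ : Bring →+* Bring) hker.le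
  · rw [← range_θmap, ← hψ, AlgHom.range_comp, (AlgHom.range_eq_top _).2
      (Ideal.Quotient.mkₐ_surjective ℚ relB), Algebra.map_top]

end
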